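/- arXiv:1602.08900 — 3 statements merged into one kernel-verified Lean document; each statement's English description precedes it below -/
import Mathlib

section
/- For every real δ ≥ 2 and every x ∈ (0, 1/2], the quantity I_δ(x) satisfies I_δ(x) ≤ (1−x) − (1−x)^{2(1−1/δ)}. -/
/-! Write `u = 1 - x`, `β = 1 - 1/δ`, `H` for the binary entropy and `η t = -t log t`. The logarithm
of the product defining `I_δ(x)` is `h(y) - β H(x)` with `h(y) = η(y) + (η(u - y) + η(x - y))/2`.
With `k = H(x) / (-2 log u) ≥ 0`, the function `h(y) + k log(u - y)` is strictly concave on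
`[0, ux]` and vanishes at both ends, so `h(y) > H(x) log(u - y) / (2 log u) ≥ β H(x)` for
`0 < y < ux` with `u - y ≤ u^{2β}`. For `δ ≥ 2` the interval `(u - u^{2β}, ux)` is nonempty, so it
lies in the set defining `I_δ(x)` and bounds its infimum by `u - u^{2β}`. -/

/-- `Idelta δ x` : for real `δ > 1` and `x ∈ (0, 1/2]`,
`I_δ(x) = inf{ y : 0 < y ≤ x and
  1 < x^{x(1−1/δ)}·(1−x)^{(1−x)(1−1/δ)}·(1−x−y)^{−(1−x−y)/2}·(x−y)^{−(x−y)/2}·y^{−y} }`. -/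
noncomputable def Idelta (δ x : ℝ) : ℝ :=
  sInf {y : ℝ | 0 < y ∧ y ≤ x ∧
    1 < x ^ (x * (1 - 1/δ)) * (1 - x) ^ ((1 - x) * (1 - 1/δ)) *
        (1 - x - y) ^ (-(1 - x - y)/2) * (x - y) ^ (-(x - y)/2) * y ^ (-y)}

open Real Set

theorem ConcaveOn.comp_const_sub {s : Set ℝ} {f : ℝ → ℝ} (hf : ConcaveOn ℝ s f) (a : ℝ) :
    ConcaveOn ℝ ((a - ·) ⁻¹' s) (fun y => f (a - y)) :=
  hf.comp_affineMap (AffineEquiv.constVSub ℝ a).toAffineMap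

noncomputable def entropyExponent (x y : ℝ) : ℝ :=
  negMulLog y + (negMulLog (1 - x - y) + negMulLog (x - y)) / 2

theorem entropyExponent_zero (x : ℝ) : entropyExponent x 0 = binEntropy x / 2 := by
  rw [entropyExponent, binEntropy_eq_negMulLog_add_negMulLog_one_sub]
  simp only [negMulLog_zero, sub_zero]
  ring

theorem entropyExponent_one_sub_mul (x : ℝ) :
    entropyExponent x ((1 - x) * x) = binEntropy x := by
  have h₁ : 1 - x - (1 - x) * x = (1 - x) * (1 - x) := by ring
  have h₂ : x - (1 - x) * x = x * x := by ring
  rw [entropyExponent, binEntropy_eq_negMulLog_add_negMulLog_one_sub, h₁, h₂,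
    negMulLog_mul, negMulLog_mul, negMulLog_mul]
  ring

theorem rpow_mul_rpow_eq_exp_entropyExponent {x y : ℝ} (β : ℝ) (hy : 0 < y)
    (hyx : y < x) (hyu : y < 1 - x) :
    x ^ (x * β) * (1 - x) ^ ((1 - x) * β) * (1 - x - y) ^ (-(1 - x - y) / 2) *
        (x - y) ^ (-(x - y) / 2) * y ^ (-y) =
      exp (entropyExponent x y - β * binEntropy x) := by
  rw [rpow_def_of_pos (by linarith), rpow_def_of_pos (by linarith),
    rpow_def_of_pos (by linarith), rpow_def_of_pos (by linarith), rpow_def_of_pos hy,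
    ← exp_add, ← exp_add, ← exp_add, ← exp_add, entropyExponent,
    binEntropy_eq_negMulLog_add_negMulLog_one_sub]
  simp only [negMulLog]
  congr 1
  ring

theorem strictConcaveOn_entropyExponent_add_mul_log {x k : ℝ} (hx₀ : 0 < x) (hx₁ : x < 1)
    (hk : 0 ≤ k) :
    StrictConcaveOn ℝ (Icc 0 ((1 - x) * x))
      (fun y => entropyExponent x y + k * log (1 - x - y)) := by
  have hsub : ∀ y ∈ Icc 0 ((1 - x) * x), 0 < 1 - x - y ∧ 0 ≤ x - y := fun y hy => by
    constructor <;> nlinarith [hy.2]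
  have hη : StrictConcaveOn ℝ (Icc 0 ((1 - x) * x)) negMulLog :=
    strictConcaveOn_negMulLog.subset Icc_subset_Ici_self (convex_Icc _ _)
  have hη₁ := ((strictConcaveOn_negMulLog.concaveOn.comp_const_sub (1 - x)).subset
    (fun y hy => (hsub y hy).1.le) (convex_Icc _ _)).smul (c := (1 / 2 : ℝ)) (by norm_num)
  have hη₂ := ((strictConcaveOn_negMulLog.concaveOn.comp_const_sub x).subset
    (fun y hy => (hsub y hy).2) (convex_Icc _ _)).smul (c := (1 / 2 : ℝ)) (by norm_num)
  have hlog := ((strictConcaveOn_log_Ioi.concaveOn.comp_const_sub (1 - x)).subset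
    (fun y hy => (hsub y hy).1) (convex_Icc _ _)).smul hk
  refine (((hη.add_concaveOn hη₁).add_concaveOn hη₂).add_concaveOn hlog).congr fun y _ => ?_
  simp only [entropyExponent, Pi.add_apply, smul_eq_mul]
  ring

theorem binEntropy_mul_log_div_lt_entropyExponent {x y : ℝ} (hx₀ : 0 < x) (hx₁ : x < 1)
    (hy₀ : 0 < y) (hy : y < (1 - x) * x) :
    binEntropy x * log (1 - x - y) / (2 * log (1 - x)) < entropyExponent x y := by
  have hlog : log (1 - x) < 0 := log_neg (by linarith) (by linarith)
  have hlog₀ := hlog.ne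
  set k := binEntropy x / -(2 * log (1 - x)) with hk
  have hg := strictConcaveOn_entropyExponent_add_mul_log hx₀ hx₁ (k := k)
    (div_nonneg (binEntropy_nonneg hx₀.le hx₁.le) (by linarith))
  have hux : 0 < (1 - x) * x := mul_pos (by linarith) hx₀
  -- the weight `k` is chosen so that the concave function vanishes at both ends of the interval
  have hg_zero : entropyExponent x 0 + k * log (1 - x - 0) = 0 := by
    rw [entropyExponent_zero, sub_zero, hk]
    field_simp
    ring
  have hg_end : entropyExponent x ((1 - x) * x) + k * log (1 - x - (1 - x) * x) = 0 := by
    rw [entropyExponent_one_sub_mul, show 1 - x - (1 - x) * x = (1 - x) * (1 - x) by ring,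
      log_mul (by linarith) (by linarith), hk]
    field_simp
    ring
  have hpos := hg.lt_on_openSegment (left_mem_Icc.2 hux.le) (right_mem_Icc.2 hux.le) hux.ne
    (by rw [openSegment_eq_Ioo hux]; exact ⟨hy₀, hy⟩)
  simp only [hg_zero, hg_end, min_self] at hpos
  have : binEntropy x * log (1 - x - y) / (2 * log (1 - x)) = -(k * log (1 - x - y)) := by
    rw [hk]
    field_simp
  linarith

theorem mul_binEntropy_lt_entropyExponent {x y β : ℝ} (hx₀ : 0 < x) (hx₁ : x < 1)
    (hy₀ : 0 < y) (hy : y < (1 - x) * x) (hβ : 1 - x - y ≤ (1 - x) ^ (2 * β)) :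
    β * binEntropy x < entropyExponent x y := by
  have hux : 0 < 1 - x - y := by nlinarith
  have hlog : log (1 - x) < 0 := log_neg (by linarith) (by linarith)
  have hβ' : β ≤ log (1 - x - y) / (2 * log (1 - x)) := by
    have := log_le_log hux hβ
    rw [log_rpow (by linarith)] at this
    rw [le_div_iff_of_neg (by linarith)]
    linarith
  calc β * binEntropy x ≤ log (1 - x - y) / (2 * log (1 - x)) * binEntropy x :=
        mul_le_mul_of_nonneg_right hβ' (binEntropy_nonneg hx₀.le hx₁.le)
    _ = binEntropy x * log (1 - x - y) / (2 * log (1 - x)) := by ring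
    _ < entropyExponent x y := binEntropy_mul_log_div_lt_entropyExponent hx₀ hx₁ hy₀ hy

/-- For every real `δ ≥ 2` and every `x ∈ (0, 1/2]`,
`I_δ(x) ≤ (1−x) − (1−x)^{2(1−1/δ)}`. -/
theorem stmt0 (δ x : ℝ) (hδ : 2 ≤ δ) (hx0 : 0 < x) (hx : x ≤ 1/2) :
    Idelta δ x ≤ (1 - x) - (1 - x) ^ (2 * (1 - 1/δ)) := by
  have hu₀ : 0 < 1 - x := by linarith
  have hu₁ : 1 - x < 1 := by linarith
  have hβ₁ : 1 ≤ 2 * (1 - 1/δ) := by linarith [one_div_le_one_div_of_le two_pos hδ]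
  have hβ₂ : 2 * (1 - 1/δ) < 2 := by linarith [one_div_pos.2 (by linarith : (0:ℝ) < δ)]
  have hlower : (1 - x) ^ (2 * (1 - 1/δ)) ≤ 1 - x := by
    simpa using rpow_le_rpow_of_exponent_ge hu₀ hu₁.le hβ₁
  have hupper : (1 - x) * (1 - x) < (1 - x) ^ (2 * (1 - 1/δ)) := by
    simpa [sq] using rpow_lt_rpow_of_exponent_gt hu₀ hu₁ hβ₂
  have hIoo : (1 - x) - (1 - x) ^ (2 * (1 - 1/δ)) < (1 - x) * x := by nlinarith
  unfold Idelta
  calc _ ≤ sInf (Ioo ((1 - x) - (1 - x) ^ (2 * (1 - 1/δ))) ((1 - x) * x)) := by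
        refine csInf_le_csInf ⟨0, fun y hy => hy.1.le⟩ (nonempty_Ioo.2 hIoo) fun y hy => ?_
        have hy₀ : 0 < y := by linarith [hy.1]
        refine ⟨hy₀, by nlinarith [hy.2], ?_⟩
        rw [rpow_mul_rpow_eq_exp_entropyExponent _ hy₀ (by nlinarith [hy.2]) (by nlinarith [hy.2]),
          one_lt_exp_iff, sub_pos]
        exact mul_binEntropy_lt_entropyExponent hx0 (by linarith) hy₀ hy.2 (by linarith [hy.1])
    _ = _ := csInf_Ioo hIoo
end

section
/- For every real δ ≥ 2, the function x ↦ I_δ(x)/x is non-increasing on the interval (0, 1/2]; that is, for all 0 < x₁ ≤ x₂ ≤ 1/2 one has I_δ(x₂)/x₂ ≤ I_δ(x₁)/x₁. -/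
/-!
Write `a = 1 - 1/δ ∈ [1/2, 1)` and `η t = -t log t`. Taking logarithms, `y` is admissible for `x`
iff `F a x y = η (x - y)/2 + η (1 - x - y)/2 + η y - a (η x + η (1 - x))` is positive. Along a ray
`y = t x` one has `x · d/dx F a x (t x) = F a x (t x) + log (1 - x - t x)/2 - a log (1 - x)`, and by
concavity in `y` the right side is nonnegative wherever `F ≥ 0` and `y ≤ x (1 - x)`; so positivity
of `F` propagates outward along rays. Hence an admissible `y₁` for `x₁` yields an admissible `y₂`
for `x₂` with `y₂ / x₂ ≤ y₁ / x₁`: along the ray, or, once the ray leaves `y ≤ x (1 - x)`, at the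
peak `y₂ = x₂ (1 - x₂)`, where `F = (1 - a) (η x₂ + η (1 - x₂)) > 0`.
-/

open Real Set

noncomputable def entropyBalance (a x y : ℝ) : ℝ :=
  negMulLog (x - y) / 2 + negMulLog (1 - x - y) / 2 + negMulLog y
    - a * (negMulLog x + negMulLog (1 - x))

def balanceSet (a x : ℝ) : Set ℝ :=
  {y | 0 < y ∧ y ≤ x ∧ 0 < entropyBalance a x y}

lemma rpow_self_mul_eq_exp {b : ℝ} (hb : 0 ≤ b) (c : ℝ) :
    b ^ (b * c) = exp (-(c * negMulLog b)) := by
  rcases hb.eq_or_lt with rfl | hb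
  · simp
  · rw [rpow_def_of_pos hb, negMulLog]
    ring_nf

lemma one_lt_rpow_prod_iff {a x y : ℝ} (hy : 0 ≤ y) (hyx : y ≤ x) (hx : x ≤ 1/2) :
    1 < x ^ (x * a) * (1 - x) ^ ((1 - x) * a) *
        (1 - x - y) ^ (-(1 - x - y)/2) * (x - y) ^ (-(x - y)/2) * y ^ (-y)
      ↔ 0 < entropyBalance a x y := by
  rw [show -(1 - x - y) / 2 = (1 - x - y) * (-1/2) by ring,
    show -(x - y) / 2 = (x - y) * (-1/2) by ring, show -y = y * (-1) by ring,
    rpow_self_mul_eq_exp (by linarith), rpow_self_mul_eq_exp (by linarith),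
    rpow_self_mul_eq_exp (by linarith), rpow_self_mul_eq_exp (by linarith),
    rpow_self_mul_eq_exp hy, ← exp_add, ← exp_add, ← exp_add, ← exp_add, one_lt_exp_iff]
  unfold entropyBalance
  ring_nf

lemma Idelta_eq_sInf_balanceSet {δ x : ℝ} (hx : x ≤ 1/2) :
    Idelta δ x = sInf (balanceSet (1 - 1/δ) x) :=
  congrArg sInf <| Set.ext fun _ => and_congr_right fun hy => and_congr_right fun hyx =>
    one_lt_rpow_prod_iff hy.le hyx hx

lemma negMulLog_pos {x : ℝ} (h0 : 0 < x) (h1 : x < 1) : 0 < negMulLog x := by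
  rw [negMulLog, neg_mul, neg_pos]
  exact mul_neg_of_pos_of_neg h0 (log_neg h0 h1)

lemma entropyBalance_peak (a x : ℝ) :
    entropyBalance a x (x * (1 - x)) = (1 - a) * (negMulLog x + negMulLog (1 - x)) := by
  rw [entropyBalance, show x - x * (1 - x) = x * x by ring,
    show 1 - x - x * (1 - x) = (1 - x) * (1 - x) by ring,
    negMulLog_mul, negMulLog_mul, negMulLog_mul]
  ring

lemma entropyBalance_peak_pos {a x : ℝ} (ha : a < 1) (hx0 : 0 < x) (hx1 : x < 1) :
    0 < entropyBalance a x (x * (1 - x)) := by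
  rw [entropyBalance_peak]
  exact mul_pos (by linarith)
    (add_pos (negMulLog_pos hx0 hx1) (negMulLog_pos (by linarith) (by linarith)))

lemma ConcaveOn.comp_mul_add {s : Set ℝ} {f : ℝ → ℝ} (hf : ConcaveOn ℝ s f) (p q : ℝ) :
    ConcaveOn ℝ ((fun z => p * z + q) ⁻¹' s) (fun z => f (p * z + q)) := by
  convert hf.comp_affineMap (AffineMap.lineMap q (p + q)) using 1 <;>
  ext z <;> simp [AffineMap.lineMap_apply_module', mul_comm]

lemma ConcaveOn.comp_mul_add_of_mapsTo {s t : Set ℝ} {f : ℝ → ℝ} (hf : ConcaveOn ℝ t f)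
    {p q : ℝ} (hs : Convex ℝ s) (hst : MapsTo (fun z => p * z + q) s t) :
    ConcaveOn ℝ s (fun z => f (p * z + q)) :=
  (hf.comp_mul_add p q).subset hst hs

/-- Along the curve `a ↦ (1 - u, u (1 - u ^ (2 a - 1)))`, parametrised by `c = u ^ (2 a - 1)`,
the balance is a concave function of `c` vanishing at `c = u` (the peak for `a = 1`) and at
`c = 1` (where `y = 0` and `a = 1/2`). -/
lemma entropyBalance_one_sub_nonneg {a u c : ℝ} (hu0 : 0 < u) (hu1 : u < 1) (huc : u ≤ c)
    (hc1 : c ≤ 1) (hlog : log c = (2 * a - 1) * log u) :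
    0 ≤ entropyBalance a (1 - u) (u * (1 - c)) := by
  have hlogu : log u < 0 := log_neg hu0 hu1
  have hlogu_ne : log u ≠ 0 := hlogu.ne
  set H := negMulLog u + negMulLog (1 - u)
  have hH : 0 ≤ H := add_nonneg (negMulLog_nonneg hu0.le hu1.le)
    (negMulLog_nonneg (by linarith) (by linarith))
  set K := -(H / (2 * log u))
  have hK : 0 ≤ K := neg_nonneg.2 (div_nonpos_of_nonneg_of_nonpos hH (by linarith))
  set Φ : ℝ → ℝ := fun z => negMulLog (u * z + (1 - 2 * u)) / 2 + negMulLog (u * z) / 2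
      + negMulLog (u - u * z) + K * log z - H / 2
  have hΦc : entropyBalance a (1 - u) (u * (1 - c)) = Φ c := by
    simp only [Φ, K, H, entropyBalance]
    rw [show 1 - u - u * (1 - c) = u * c + (1 - 2 * u) by ring,
      show 1 - (1 - u) - u * (1 - c) = u * c by ring, sub_sub_cancel,
      show u * (1 - c) = u - u * c by ring, hlog]
    field_simp
    ring
  have hΦu : Φ u = 0 := by
    simp only [Φ, K, H]
    rw [show u * u + (1 - 2 * u) = (1 - u) * (1 - u) by ring,
      show u - u * u = u * (1 - u) by ring, negMulLog_mul, negMulLog_mul, negMulLog_mul]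
    field_simp
    ring
  have hΦ1 : Φ 1 = 0 := by
    simp only [Φ, H]
    rw [mul_one, sub_self, negMulLog_zero, log_one]
    ring_nf
  have hΦ : ConcaveOn ℝ (Icc u 1) Φ := by
    have hconv : Convex ℝ (Icc u 1) := convex_Icc u 1
    have h1 := concaveOn_negMulLog.comp_mul_add_of_mapsTo (p := u) (q := 1 - 2 * u) hconv
      fun z hz => by simp only [mem_Ici]; nlinarith [hz.1]
    have h2 := concaveOn_negMulLog.comp_mul_add_of_mapsTo (p := u) (q := 0) hconv
      fun z hz => by simp only [mem_Ici]; nlinarith [hz.1]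
    have h3 := concaveOn_negMulLog.comp_mul_add_of_mapsTo (p := -u) (q := u) hconv
      fun z hz => by simp only [mem_Ici]; nlinarith [hz.2]
    have h4 := strictConcaveOn_log_Ioi.concaveOn.subset
      (fun z hz => mem_Ioi.2 (hu0.trans_le hz.1)) hconv
    refine ((((h1.smul (by norm_num : (0 : ℝ) ≤ 1/2)).add
      (h2.smul (by norm_num : (0 : ℝ) ≤ 1/2))).add h3).add (h4.smul hK)).add_const (-(H / 2))
      |>.congr fun z _ => ?_
    simp only [Φ, Pi.add_apply, smul_eq_mul]
    ring_nf
  rw [hΦc]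
  simpa [hΦu, hΦ1] using hΦ.min_le_of_mem_Icc (left_mem_Icc.2 hu1.le)
    (right_mem_Icc.2 hu1.le) ⟨huc, hc1⟩

lemma concaveOn_entropyBalance_add_log (a : ℝ) {x : ℝ} (hx : x < 1) :
    ConcaveOn ℝ (Icc 0 (x * (1 - x))) fun y => entropyBalance a x y + log (1 - x - y) / 2 := by
  have hconv : Convex ℝ (Icc 0 (x * (1 - x))) := convex_Icc _ _
  have h1 := concaveOn_negMulLog.comp_mul_add_of_mapsTo (p := -1) (q := x) hconv
    fun z hz => by simp only [mem_Ici]; nlinarith [hz.2, sq_nonneg x]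
  have h2 := concaveOn_negMulLog.comp_mul_add_of_mapsTo (p := -1) (q := 1 - x) hconv
    fun z hz => by simp only [mem_Ici]; nlinarith [hz.2]
  have h3 := concaveOn_negMulLog.subset (fun z hz => mem_Ici.2 hz.1) hconv
  have h4 := strictConcaveOn_log_Ioi.concaveOn.comp_mul_add_of_mapsTo (p := -1) (q := 1 - x)
    hconv fun z hz => by simp only [mem_Ioi]; nlinarith [hz.2]
  refine ((((h1.smul (by norm_num : (0 : ℝ) ≤ 1/2)).add
    (h2.smul (by norm_num : (0 : ℝ) ≤ 1/2))).add h3).add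
    (h4.smul (by norm_num : (0 : ℝ) ≤ 1/2))).add_const (-(a * (negMulLog x + negMulLog (1 - x))))
    |>.congr fun z _ => ?_
  simp only [entropyBalance, Pi.add_apply, smul_eq_mul]
  ring_nf

lemma entropyBalance_add_drift_nonneg {a x y : ℝ} (ha1 : 1/2 ≤ a) (ha2 : a ≤ 1)
    (hx0 : 0 < x) (hx : x ≤ 1/2) (hy : y ≤ x * (1 - x))
    (hF : 0 ≤ entropyBalance a x y) :
    0 ≤ entropyBalance a x y + (log (1 - x - y) / 2 - a * log (1 - x)) := by
  have hu0 : 0 < 1 - x := by linarith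
  have hu1 : 1 - x < 1 := by linarith
  set c := (1 - x) ^ (2 * a - 1)
  have hc0 : 0 < c := rpow_pos_of_pos hu0 _
  have hlogc : log c = (2 * a - 1) * log (1 - x) := log_rpow hu0 _
  have huc : 1 - x ≤ c := by
    simpa using rpow_le_rpow_of_exponent_ge hu0 hu1.le (show 2 * a - 1 ≤ 1 by linarith)
  have hc1 : c ≤ 1 := by
    simpa using rpow_le_rpow_of_exponent_ge hu0 hu1.le (show 0 ≤ 2 * a - 1 by linarith)
  set y₀ := (1 - x) * (1 - c)
  have hdrift₀ : log (1 - x - y₀) / 2 - a * log (1 - x) = 0 := by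
    rw [show 1 - x - y₀ = (1 - x) * c by ring, log_mul hu0.ne' hc0.ne', hlogc]
    ring
  -- below `y₀` the drift is nonnegative; above it, use concavity between `y₀` and the peak
  rcases le_or_gt y y₀ with hyy₀ | hyy₀
  · have : log (1 - x - y₀) ≤ log (1 - x - y) :=
      log_le_log (by nlinarith) (by linarith)
    linarith
  set G := fun z => entropyBalance a x z + log (1 - x - z) / 2 + -(a * log (1 - x))
  have hG : ConcaveOn ℝ (Icc 0 (x * (1 - x))) G :=
    (concaveOn_entropyBalance_add_log a (by linarith)).add_const _
  have hGy₀ : 0 ≤ G y₀ := by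
    have := entropyBalance_one_sub_nonneg hu0 hu1 huc hc1 hlogc
    rw [sub_sub_cancel] at this
    simp only [G]
    linarith
  have hGpeak : 0 ≤ G (x * (1 - x)) := by
    have hval : G (x * (1 - x)) = (1 - a) * x * (log (1 - x) - log x) := by
      simp only [G, entropyBalance_peak]
      rw [show 1 - x - x * (1 - x) = (1 - x) * (1 - x) by ring,
        log_mul hu0.ne' hu0.ne', negMulLog, negMulLog]
      ring
    rw [hval]
    exact mul_nonneg (mul_nonneg (by linarith) hx0.le)
      (sub_nonneg.2 (log_le_log hx0 (by linarith)))
  have := hG.min_le_of_mem_Icc ⟨by nlinarith, hyy₀.le.trans hy⟩ (right_mem_Icc.2 (by nlinarith))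
    ⟨hyy₀.le, hy⟩
  simp only [G] at this
  linarith [le_min hGy₀ hGpeak]

lemma hasDerivAt_entropyBalance_ray {a t x : ℝ} (ht : 0 < t) (hx : 0 < x) (htx : t < 1 - x) :
    HasDerivAt (fun z => entropyBalance a z (t * z))
      ((entropyBalance a x (t * x) + (log (1 - x - t * x) / 2 - a * log (1 - x))) / x) x := by
  have hline : ∀ p q : ℝ, p * x + q ≠ 0 →
      HasDerivAt (fun z => negMulLog (p * z + q)) ((-log (p * x + q) - 1) * p) x := by
    intro p q h
    have := (hasDerivAt_negMulLog h).comp x (((hasDerivAt_id' x).const_mul p).add_const q)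
    rwa [mul_one] at this
  have h1 := hline (1 - t) 0 (by nlinarith)
  have h2 := hline (-1 - t) 1 (by nlinarith)
  have h3 := hline t 0 (by positivity)
  have h4 := hline 1 0 (by linarith)
  have h5 := hline (-1) 1 (by linarith)
  refine ((((h1.div_const 2).add (h2.div_const 2)).add h3).sub ((h4.add h5).const_mul a)
    |>.congr_deriv ?_).congr_of_eventuallyEq (Filter.Eventually.of_forall fun z => ?_)
  · rw [eq_div_iff hx.ne']
    simp only [entropyBalance, negMulLog]
    ring_nf
  · simp only [entropyBalance, Pi.add_apply, Pi.sub_apply]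
    ring_nf

lemma pos_of_deriv_nonneg_of_pos {g g' : ℝ → ℝ} {a b : ℝ} (hab : a ≤ b)
    (hg : ContinuousOn g (Icc a b)) (hd : ∀ z ∈ Ioo a b, HasDerivAt g (g' z) z)
    (hmono : ∀ z ∈ Ioo a b, 0 < g z → 0 ≤ g' z) (ha : 0 < g a) : 0 < g b := by
  by_contra! hb
  set U := Icc a b ∩ g ⁻¹' Iic 0
  have hbdd : BddBelow U := ⟨a, fun z hz => hz.1.1⟩
  obtain ⟨⟨has, hsb⟩, hgs⟩ : sInf U ∈ U :=
    (hg.preimage_isClosed_of_isClosed isClosed_Icc isClosed_Iic).csInf_mem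
      ⟨b, right_mem_Icc.2 hab, hb⟩ hbdd
  have hpos : ∀ z ∈ Ico a (sInf U), 0 < g z := fun z hz => by
    by_contra! hz'
    exact hz.2.not_ge (csInf_le hbdd ⟨⟨hz.1, hz.2.le.trans hsb⟩, hz'⟩)
  have hIoo : ∀ z ∈ Ioo a (sInf U), z ∈ Ioo a b := fun z hz => ⟨hz.1, hz.2.trans_le hsb⟩
  have hmonoOn : MonotoneOn g (Icc a (sInf U)) := by
    refine monotoneOn_of_deriv_nonneg (convex_Icc _ _) (hg.mono (Icc_subset_Icc_right hsb))
      (fun z hz => ?_) fun z hz => ?_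
    · rw [interior_Icc] at hz
      exact (hd z (hIoo z hz)).differentiableAt.differentiableWithinAt
    · rw [interior_Icc] at hz
      rw [(hd z (hIoo z hz)).deriv]
      exact hmono z (hIoo z hz) (hpos z (Ioo_subset_Ico_self hz))
  have := hmonoOn (left_mem_Icc.2 has) (right_mem_Icc.2 has) has
  exact (ha.trans_le this).not_ge hgs

lemma entropyBalance_ray_pos {a t x₁ x₂ : ℝ} (ha1 : 1/2 ≤ a) (ha2 : a ≤ 1) (hx₁ : 0 < x₁)
    (h12 : x₁ ≤ x₂) (hx₂ : x₂ ≤ 1/2) (ht : 0 < t) (htx₂ : t ≤ 1 - x₂)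
    (hF : 0 < entropyBalance a x₁ (t * x₁)) : 0 < entropyBalance a x₂ (t * x₂) := by
  refine pos_of_deriv_nonneg_of_pos (g := fun z => entropyBalance a z (t * z)) h12
    (Continuous.continuousOn (by unfold entropyBalance; fun_prop))
    (fun z hz => hasDerivAt_entropyBalance_ray ht (hx₁.trans hz.1) (by linarith [hz.2]))
    (fun z hz hFz => div_nonneg ?_ (hx₁.trans hz.1).le) hF
  have hz0 := hx₁.trans hz.1
  exact entropyBalance_add_drift_nonneg ha1 ha2 hz0 (by linarith [hz.2])
    (by nlinarith [hz.2]) hFz.le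

lemma exists_mem_balanceSet_div_le {a x₁ x₂ y₁ : ℝ} (ha1 : 1/2 ≤ a) (ha2 : a < 1)
    (hx₁ : 0 < x₁) (h12 : x₁ ≤ x₂) (hx₂ : x₂ ≤ 1/2) (hy₁ : 0 < y₁)
    (hF : 0 < entropyBalance a x₁ y₁) : ∃ y₂ ∈ balanceSet a x₂, y₂ / x₂ ≤ y₁ / x₁ := by
  have hx₂0 : 0 < x₂ := hx₁.trans_le h12
  set t := y₁ / x₁
  have ht : 0 < t := div_pos hy₁ hx₁
  rcases le_or_gt t (1 - x₂) with htx₂ | htx₂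
  · refine ⟨t * x₂, ⟨by positivity, by nlinarith, ?_⟩, by rw [mul_div_cancel_right₀ _ hx₂0.ne']⟩
    exact entropyBalance_ray_pos ha1 ha2.le hx₁ h12 hx₂ ht htx₂
      (by rwa [div_mul_cancel₀ _ hx₁.ne'])
  · refine ⟨x₂ * (1 - x₂), ⟨by nlinarith, by nlinarith, ?_⟩, ?_⟩
    · exact entropyBalance_peak_pos ha2 hx₂0 (by linarith)
    · rw [mul_div_cancel_left₀ _ hx₂0.ne']
      exact htx₂.le

lemma csInf_div_le_csInf_div {S T : Set ℝ} {p q : ℝ} (hp : 0 < p) (hq : 0 ≤ q) (hS : S.Nonempty)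
    (hT : BddBelow T) (h : ∀ y ∈ S, ∃ z ∈ T, z / q ≤ y / p) : sInf T / q ≤ sInf S / p := by
  rw [le_div_iff₀ hp]
  refine le_csInf hS fun y hy => ?_
  obtain ⟨z, hz, hzy⟩ := h y hy
  rw [← le_div_iff₀ hp]
  exact (div_le_div_of_nonneg_right (csInf_le hT hz) hq).trans hzy

/-- For every real `δ ≥ 2`, the function `x ↦ I_δ(x)/x` is non-increasing on `(0, 1/2]`. -/
theorem stmt1 (δ : ℝ) (hδ : 2 ≤ δ) (x₁ x₂ : ℝ)
    (h0 : 0 < x₁) (h12 : x₁ ≤ x₂) (h2 : x₂ ≤ 1/2) :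
    Idelta δ x₂ / x₂ ≤ Idelta δ x₁ / x₁ := by
  have ha1 : 1/2 ≤ 1 - 1/δ := by
    have : 1/δ ≤ 1/2 := one_div_le_one_div_of_le two_pos hδ
    linarith
  have ha2 : 1 - 1/δ < 1 := by
    have : 0 < 1/δ := by positivity
    linarith
  have hx₁ : x₁ < 1 := by linarith
  rw [Idelta_eq_sInf_balanceSet h2, Idelta_eq_sInf_balanceSet (h12.trans h2)]
  refine csInf_div_le_csInf_div h0 (h0.trans_le h12).le ?_ ⟨0, fun y hy => hy.1.le⟩ fun y hy =>
    exists_mem_balanceSet_div_le ha1 ha2 h0 h12 h2 hy.1 hy.2.2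
  exact ⟨x₁ * (1 - x₁), by nlinarith, by nlinarith, entropyBalance_peak_pos ha2 h0 hx₁⟩
end

section
/- For every even integer M ≥ 4 and every 1 ≤ x ≤ M, the second moment of the number of elements of {1,…,x} matched within {1,…,x} under a uniformly random perfect matching satisfies E[Z_x²] = x(x−1)·(x² − 5x + 2M) / ((M−1)(M−3)). -/
/-- The perfect matchings of `{1,…,M}` (modelled as `Fin M`): fixed-point-free
involutions of `Fin M`. -/
def matchings (M : ℕ) : Finset (Fin M → Fin M) :=
  Finset.univ.filter (fun ξ => (∀ i, ξ (ξ i) = i) ∧ ∀ i, ξ i ≠ i)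

/-- `Z_x` : the number of elements of the first `x` points that are matched with
one of the first `x` points. -/
def Zcard (M : ℕ) (x : ℕ) (ξ : Fin M → Fin M) : ℕ :=
  (Finset.univ.filter (fun i : Fin M => (i : ℕ) < x ∧ ((ξ i : Fin M) : ℕ) < x)).card

/-! By double counting, `∑_ξ #{i ∈ T | ξ i ∈ T}² = ∑_{i, j ∈ T} #{ξ | ξ i ∈ T ∧ ξ j ∈ T}`,
so the second moment only involves the one- and two-point statistics of a uniform matching.
Conjugation by a permutation maps matchings bijectively to matchings, and conjugating by
transpositions shows that `ξ i = k` has probability `1 / (M - 1)` for every `k ≠ i`, and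
`ξ i = k ∧ ξ j = l` has probability `1 / ((M - 1) (M - 3))` for distinct `i, k, j, l`.
Summing these over `T` (the pair `ξ i = j` contributes separately) gives the formula. -/

open Finset

theorem Finset.sum_eq_card_sdiff_nsmul {α β : Type*} [DecidableEq α] [AddCommMonoid β]
    {s t : Finset α} {f : α → β} {c : β} (hzero : ∀ a ∈ s, a ∈ t → f a = 0)
    (hval : ∀ a ∈ s, a ∉ t → f a = c) : ∑ a ∈ s, f a = #(s \ t) • c := by
  rw [← sum_subset sdiff_subset fun a ha has => hzero a ha (by simpa [ha] using has)]
  exact sum_eq_card_nsmul fun a ha => hval a (mem_sdiff.1 ha).1 (mem_sdiff.1 ha).2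

theorem Finset.sum_card_filter_sq {α β : Type*} (S : Finset β) (T : Finset α)
    (p : β → α → Prop) [∀ b a, Decidable (p b a)] :
    ∑ b ∈ S, #{a ∈ T | p b a} ^ 2 = ∑ i ∈ T, ∑ j ∈ T, #{b ∈ S | p b i ∧ p b j} := by
  simp_rw [sq, card_filter, sum_mul_sum, ite_zero_mul_ite_zero, mul_one]
  rw [sum_comm]
  exact sum_congr rfl fun _ _ => sum_comm

theorem Equiv.conj_involutive_of_fixedPointFree {α β : Type*} (e : α ≃ β) {f : α → α}
    (hinv : ∀ a, f (f a) = a) (hfree : ∀ a, f a ≠ a) :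
    (∀ b, e.conj f (e.conj f b) = b) ∧ ∀ b, e.conj f b ≠ b := by
  refine ⟨fun b => by simp [hinv], fun b h => hfree (e.symm b) ?_⟩
  simpa [← Equiv.eq_symm_apply] using h

variable {M : ℕ}

theorem mem_matchings {ξ : Fin M → Fin M} :
    ξ ∈ matchings M ↔ (∀ i, ξ (ξ i) = i) ∧ ∀ i, ξ i ≠ i := by
  simp [matchings]

theorem matchings_nonempty (hM : Even M) : (matchings M).Nonempty := by
  obtain ⟨m, rfl⟩ := hM.two_dvd
  have hrev : ∀ a : Fin 2, a.rev ≠ a := by decide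
  exact ⟨finProdFinEquiv.conj (Prod.map Fin.rev id), mem_matchings.2 <|
    Equiv.conj_involutive_of_fixedPointFree _ (fun p => Prod.ext (Fin.rev_rev _) rfl)
      fun p h => hrev p.1 (by simpa [Prod.ext_iff] using h)⟩

theorem conj_mem_matchings (σ : Equiv.Perm (Fin M)) {ξ : Fin M → Fin M}
    (hξ : ξ ∈ matchings M) : σ.conj ξ ∈ matchings M :=
  mem_matchings.2 <|
    σ.conj_involutive_of_fixedPointFree (mem_matchings.1 hξ).1 (mem_matchings.1 hξ).2

theorem card_matchings_filter_conj (σ : Equiv.Perm (Fin M))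
    (p : (Fin M → Fin M) → Prop) [DecidablePred p] :
    #{ξ ∈ matchings M | p (σ.conj ξ)} = #{ξ ∈ matchings M | p ξ} := by
  refine card_equiv σ.conj fun ξ => ?_
  simp only [mem_filter]
  refine ⟨fun h => ⟨conj_mem_matchings σ h.1, h.2⟩, fun h => ⟨?_, h.2⟩⟩
  simpa only [← Equiv.conj_symm, Equiv.symm_apply_apply] using conj_mem_matchings σ.symm h.1

section Symmetry

variable {i j k l k' l' : Fin M}

theorem card_matchings_apply_self : #{ξ ∈ matchings M | ξ i = i} = 0 :=
  card_eq_zero.2 <| filter_eq_empty_iff.2 fun _ hξ => (mem_matchings.1 hξ).2 i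

theorem card_matchings_apply_eq_of_ne (hk : k ≠ i) (hk' : k' ≠ i) :
    #{ξ ∈ matchings M | ξ i = k} = #{ξ ∈ matchings M | ξ i = k'} := by
  have := card_matchings_filter_conj (Equiv.swap k k') (fun ξ => ξ i = k')
  simpa [Equiv.swap_apply_of_ne_of_ne hk.symm hk'.symm, Equiv.swap_apply_eq_iff] using this

theorem sub_one_mul_card_matchings_apply_eq (hk : k ≠ i) :
    (M - 1) * #{ξ ∈ matchings M | ξ i = k} = #(matchings M) := by
  have hsum := sum_eq_card_sdiff_nsmul (s := univ) (t := {i})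
    (f := fun k' => #{ξ ∈ matchings M | ξ i = k'})
    (fun k' _ hk' => by rw [mem_singleton.1 hk']; exact card_matchings_apply_self)
    (fun k' _ hk' => card_matchings_apply_eq_of_ne (mem_singleton.not.1 hk') hk)
  rw [sum_card_fiberwise_eq_card_filter, filter_true_of_mem fun _ _ => mem_univ _,
    card_sdiff_of_subset (subset_univ _), card_univ, Fintype.card_fin, card_singleton,
    smul_eq_mul] at hsum
  exact hsum.symm

theorem card_matchings_apply_eq_and_apply_eq_of_mem (hki : k ≠ i) (hji : j ≠ i)
    (hjk : j ≠ k) (hl : l ∈ ({i, k, j} : Finset (Fin M))) :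
    #{ξ ∈ matchings M | ξ i = k ∧ ξ j = l} = 0 := by
  refine card_eq_zero.2 <| filter_eq_empty_iff.2 fun ξ hξ ⟨hξi, hξj⟩ => ?_
  obtain ⟨hinv, hfree⟩ := mem_matchings.1 hξ
  simp only [mem_insert, mem_singleton] at hl
  rcases hl with rfl | rfl | rfl
  · have h := hinv j
    rw [hξj, hξi] at h
    exact hjk h.symm
  · have hi := hinv i
    have hj := hinv j
    rw [hξi] at hi
    rw [hξj] at hj
    exact hji (hj.symm.trans hi)
  · exact hfree _ hξj

theorem card_matchings_apply_eq_and_apply_eq_of_notMem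
    (hl : l ∉ ({i, k, j} : Finset (Fin M))) (hl' : l' ∉ ({i, k, j} : Finset (Fin M))) :
    #{ξ ∈ matchings M | ξ i = k ∧ ξ j = l} = #{ξ ∈ matchings M | ξ i = k ∧ ξ j = l'} := by
  simp only [mem_insert, mem_singleton, not_or] at hl hl'
  have := card_matchings_filter_conj (Equiv.swap l l') (fun ξ => ξ i = k ∧ ξ j = l')
  simpa [Equiv.swap_apply_of_ne_of_ne, Equiv.swap_apply_eq_iff, *, Ne.symm] using this

theorem sub_three_mul_card_matchings_apply_eq_and_apply_eq (hki : k ≠ i) (hji : j ≠ i)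
    (hjk : j ≠ k) (hl : l ∉ ({i, k, j} : Finset (Fin M))) :
    (M - 3) * #{ξ ∈ matchings M | ξ i = k ∧ ξ j = l} = #{ξ ∈ matchings M | ξ i = k} := by
  have hsum := sum_eq_card_sdiff_nsmul (s := univ) (t := {i, k, j})
    (f := fun l' => #{ξ ∈ matchings M | ξ i = k ∧ ξ j = l'})
    (fun l' _ hl' => card_matchings_apply_eq_and_apply_eq_of_mem hki hji hjk hl')
    (fun l' _ hl' => card_matchings_apply_eq_and_apply_eq_of_notMem hl' hl)
  have hcard : #({i, k, j} : Finset (Fin M)) = 3 :=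
    card_eq_three.2 ⟨i, k, j, hki.symm, hji.symm, hjk.symm, rfl⟩
  have hfiber := sum_card_fiberwise_eq_card_filter {ξ ∈ matchings M | ξ i = k} univ (· j)
  simp only [filter_filter, mem_univ, and_true] at hfiber
  rw [hfiber, card_sdiff_of_subset (subset_univ _), card_univ, Fintype.card_fin, hcard,
    smul_eq_mul] at hsum
  exact hsum.symm

end Symmetry

section Moments

variable {i j k l : Fin M} (T : Finset (Fin M))

theorem card_matchings_apply_eq_div (hk : k ≠ i) :
    (#{ξ ∈ matchings M | ξ i = k} : ℝ) = #(matchings M) / (M - 1) := by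
  have hM : 1 < M := by
    have := i.isLt; have := k.isLt; have := Fin.val_ne_of_ne hk
    omega
  rw [eq_div_iff (by rw [sub_ne_zero]; norm_cast; omega), mul_comm,
    ← sub_one_mul_card_matchings_apply_eq hk, Nat.cast_mul, Nat.cast_sub hM.le, Nat.cast_one]

theorem card_matchings_apply_eq_and_apply_eq_div (hM : 4 ≤ M) (hki : k ≠ i) (hji : j ≠ i)
    (hjk : j ≠ k) (hl : l ∉ ({i, k, j} : Finset (Fin M))) :
    (#{ξ ∈ matchings M | ξ i = k ∧ ξ j = l} : ℝ) = #(matchings M) / ((M - 1) * (M - 3)) := by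
  rw [← div_div, ← card_matchings_apply_eq_div hki,
    eq_div_iff (by rw [sub_ne_zero]; norm_cast; omega), mul_comm,
    ← sub_three_mul_card_matchings_apply_eq_and_apply_eq hki hji hjk hl, Nat.cast_mul,
    Nat.cast_sub (by omega : 3 ≤ M), Nat.cast_ofNat]

theorem card_matchings_apply_mem (hi : i ∈ T) :
    (#{ξ ∈ matchings M | ξ i ∈ T} : ℝ) = (#T - 1) * (#(matchings M) / (M - 1)) := by
  rw [← sum_card_fiberwise_eq_card_filter, Nat.cast_sum,
    sum_eq_card_sdiff_nsmul (t := {i}) (c := (#(matchings M) / (M - 1) : ℝ))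
      (fun k _ hk => by rw [mem_singleton.1 hk, card_matchings_apply_self, Nat.cast_zero])
      (fun k _ hk => card_matchings_apply_eq_div (mem_singleton.not.1 hk)),
    nsmul_eq_mul, cast_card_sdiff (singleton_subset_iff.2 hi), card_singleton, Nat.cast_one]

theorem card_matchings_apply_eq_and_apply_mem (hM : 4 ≤ M) (hki : k ≠ i) (hji : j ≠ i)
    (hjk : j ≠ k) (hT : {i, k, j} ⊆ T) :
    (#{ξ ∈ matchings M | ξ i = k ∧ ξ j ∈ T} : ℝ)
      = (#T - 3) * (#(matchings M) / ((M - 1) * (M - 3))) := by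
  have hfiber := sum_card_fiberwise_eq_card_filter {ξ ∈ matchings M | ξ i = k} T (· j)
  simp only [filter_filter] at hfiber
  rw [← hfiber, Nat.cast_sum,
    sum_eq_card_sdiff_nsmul (t := {i, k, j})
      (fun l _ hl => by
        rw [card_matchings_apply_eq_and_apply_eq_of_mem hki hji hjk hl, Nat.cast_zero])
      (fun l _ hl => card_matchings_apply_eq_and_apply_eq_div hM hki hji hjk hl),
    nsmul_eq_mul, cast_card_sdiff hT,
    card_eq_three.2 ⟨i, k, j, hki.symm, hji.symm, hjk.symm, rfl⟩, Nat.cast_ofNat]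

theorem card_matchings_apply_mem_and_apply_mem (hM : 4 ≤ M) (hij : i ≠ j) (hi : i ∈ T)
    (hj : j ∈ T) :
    (#{ξ ∈ matchings M | ξ i ∈ T ∧ ξ j ∈ T} : ℝ) = #(matchings M) / (M - 1)
      + (#T - 2) * (#T - 3) * (#(matchings M) / ((M - 1) * (M - 3))) := by
  have hfiber := sum_card_fiberwise_eq_card_filter {ξ ∈ matchings M | ξ j ∈ T} T (· i)
  simp only [filter_filter, and_comm] at hfiber
  have hpartner : #{ξ ∈ matchings M | ξ i = j ∧ ξ j ∈ T} = #{ξ ∈ matchings M | ξ i = j} := by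
    refine congrArg card (filter_congr fun ξ hξ => and_iff_left_of_imp fun hξi => ?_)
    rw [← hξi, (mem_matchings.1 hξ).1]
    exact hi
  rw [← hfiber, ← add_sum_erase _ _ hj, hpartner, Nat.cast_add, Nat.cast_sum,
    card_matchings_apply_eq_div hij.symm,
    sum_eq_card_sdiff_nsmul (t := {i})
      (fun k _ hk => by
        rw [mem_singleton.1 hk, Nat.cast_eq_zero, card_eq_zero, filter_eq_empty_iff]
        exact fun ξ hξ hξi => (mem_matchings.1 hξ).2 i hξi.1)
      (fun k hk hki => card_matchings_apply_eq_and_apply_mem T hM (mem_singleton.not.1 hki)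
        hij.symm (ne_of_mem_erase hk).symm
        (by simp only [insert_subset_iff, singleton_subset_iff, hi, hj, mem_of_mem_erase hk,
          and_self])),
    nsmul_eq_mul, cast_card_sdiff (singleton_subset_iff.2 (mem_erase.2 ⟨hij, hi⟩)),
    cast_card_erase_of_mem hj, card_singleton, Nat.cast_one]
  ring

theorem sum_sq_card_matchings_apply_mem (hM : 4 ≤ M) :
    ∑ ξ ∈ matchings M, (#{i ∈ T | ξ i ∈ T} : ℝ) ^ 2
      = #T * (#T - 1) * (#T ^ 2 - 5 * #T + 2 * M) / ((M - 1) * (M - 3)) * #(matchings M) := by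
  have hM1 : (M : ℝ) - 1 ≠ 0 := by rw [sub_ne_zero]; norm_cast; omega
  have hM3 : (M : ℝ) - 3 ≠ 0 := by rw [sub_ne_zero]; norm_cast; omega
  have hpairs : ∀ i ∈ T, ∑ j ∈ T, (#{ξ ∈ matchings M | ξ i ∈ T ∧ ξ j ∈ T} : ℝ)
      = (#T - 1) * (#(matchings M) / (M - 1)) + (#T - 1) * (#(matchings M) / (M - 1)
        + (#T - 2) * (#T - 3) * (#(matchings M) / ((M - 1) * (M - 3)))) := by
    intro i hi
    rw [← add_sum_erase _ _ hi]
    simp only [and_self]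
    rw [card_matchings_apply_mem T hi,
      sum_congr rfl fun j hj => card_matchings_apply_mem_and_apply_mem T hM
        (ne_of_mem_erase hj).symm hi (mem_of_mem_erase hj),
      sum_const, nsmul_eq_mul, cast_card_erase_of_mem hi]
  have hsq := congrArg (Nat.cast (R := ℝ))
    (sum_card_filter_sq (matchings M) T fun ξ i => ξ i ∈ T)
  push_cast at hsq
  rw [hsq, sum_congr rfl hpairs, sum_const, nsmul_eq_mul]
  field_simp
  ring

end Moments

theorem stmt6_general (M : ℕ) (hM : 4 ≤ M) (hEven : Even M) (x : ℕ) (hxM : x ≤ M) :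
    (∑ ξ ∈ matchings M, ((Zcard M x ξ : ℝ)) ^ 2) / ((matchings M).card : ℝ)
      = (x : ℝ) * ((x : ℝ) - 1) * ((x : ℝ) ^ 2 - 5 * (x : ℝ) + 2 * (M : ℝ))
          / (((M : ℝ) - 1) * ((M : ℝ) - 3)) := by
  set T : Finset (Fin M) := {i | (i : ℕ) < x}
  have hT : #T = x := by rw [Fin.card_filter_val_lt, min_eq_right hxM]
  have hZ : ∀ ξ, Zcard M x ξ = #{i ∈ T | ξ i ∈ T} := fun ξ => by
    simp [Zcard, T, filter_filter]
  have hN : (#(matchings M) : ℝ) ≠ 0 := by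
    exact_mod_cast (matchings_nonempty hEven).card_pos.ne'
  simp_rw [hZ]
  rw [sum_sq_card_matchings_apply_mem T hM, hT, mul_div_cancel_right₀ _ hN]

/-- For every even integer `M ≥ 4` and every `1 ≤ x ≤ M`, the second moment of
the number of elements of `{1,…,x}` matched within `{1,…,x}` under a uniformly
random perfect matching satisfies
`E[Z_x²] = x(x−1)·(x² − 5x + 2M) / ((M−1)(M−3))`. -/
theorem stmt6 (M : ℕ) (hM : 4 ≤ M) (hEven : Even M) (x : ℕ) (hx1 : 1 ≤ x) (hxM : x ≤ M) :
    (∑ ξ ∈ matchings M, ((Zcard M x ξ : ℝ)) ^ 2) / ((matchings M).card : ℝ)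
      = (x : ℝ) * ((x : ℝ) - 1) * ((x : ℝ) ^ 2 - 5 * (x : ℝ) + 2 * (M : ℝ))
          / (((M : ℝ) - 1) * ((M : ℝ) - 3)) :=
  stmt6_general M hM hEven x hxM
end
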